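/- arXiv:math/0510048 — 2 statements merged into one kernel-verified Lean document; each statement's English description precedes it below -/
import Mathlib

section
/- The function g(x) = Λ(x) + Λ(π/2 − x) on the interval [0, π/2] attains its maximum value 2·Λ(π/4) at x = π/4, and x = π/4 is the only point of [0, π/2] where this maximum is attained. -/
open Real Filter Set

/-- The Lobachevsky function Λ(x) = −∫₀ˣ log|2 sin s| ds. -/
noncomputable def Lob (x : ℝ) : ℝ := -∫ s in (0:ℝ)..x, Real.log |2 * Real.sin s|

/-!
`log |2 sin|` is locally integrable (its singularities are logarithmic), so `Λ` is continuous,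
and away from the zeros of `sin` it has derivative `-log |2 sin x|`. Hence
`g(x) = Λ(x) + Λ(π/2 - x)` has derivative `log (cos x / sin x) > 0` on `(0, π/4)`, so `g` is
strictly increasing on `[0, π/4]`; the symmetry `g(π/2 - x) = g(x)` covers `[π/4, π/2]`.
-/

open MeasureTheory intervalIntegral

theorem intervalIntegrable_log_abs_two_mul_sin (a b : ℝ) :
    IntervalIntegrable (fun s => log |2 * sin s|) volume a b := by
  simpa only [Real.norm_eq_abs] using
    (analyticOnNhd_const.mul analyticOnNhd_sin).meromorphicOn.intervalIntegrable_log_norm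

@[fun_prop]
theorem continuous_lob : Continuous Lob :=
  (continuous_primitive intervalIntegrable_log_abs_two_mul_sin 0).neg

theorem hasDerivAt_lob {x : ℝ} (hx : sin x ≠ 0) : HasDerivAt Lob (-log |2 * sin x|) x :=
  (integral_hasDerivAt_right (intervalIntegrable_log_abs_two_mul_sin 0 x)
    (by fun_prop : Measurable fun s => log |2 * sin s|).stronglyMeasurable.stronglyMeasurableAtFilter
    (by fun_prop (disch := simpa using hx))).neg

theorem hasDerivAt_lob_add_lob_pi_div_two_sub {x : ℝ} (hsin : sin x ≠ 0) (hcos : cos x ≠ 0) :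
    HasDerivAt (fun y => Lob y + Lob (π / 2 - y)) (log |2 * cos x| - log |2 * sin x|) x := by
  have hcomp := (hasDerivAt_lob (x := π / 2 - x) (by rwa [sin_pi_div_two_sub])).comp x
    ((hasDerivAt_id x).const_sub (π / 2))
  refine ((hasDerivAt_lob hsin).add hcomp).congr_deriv ?_
  rw [sin_pi_div_two_sub]
  ring

theorem sin_lt_cos_of_lt_pi_div_four {x : ℝ} (hx0 : 0 ≤ x) (hx : x < π / 4) :
    sin x < cos x := by
  rw [← sin_pi_div_two_sub]
  exact strictMonoOn_sin ⟨by linarith, by linarith⟩ ⟨by linarith, by linarith⟩ (by linarith)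

theorem strictMonoOn_lob_add_lob_pi_div_two_sub :
    StrictMonoOn (fun x => Lob x + Lob (π / 2 - x)) (Icc 0 (π / 4)) := by
  have hpi := pi_pos
  refine strictMonoOn_of_deriv_pos (convex_Icc _ _) (by fun_prop) ?_
  rw [interior_Icc]
  rintro x ⟨hx0, hx⟩
  have hsin : 0 < sin x := sin_pos_of_pos_of_lt_pi hx0 (by linarith)
  have hsc := sin_lt_cos_of_lt_pi_div_four hx0.le hx
  rw [(hasDerivAt_lob_add_lob_pi_div_two_sub hsin.ne' (by linarith)).deriv, sub_pos,
    abs_of_pos (by linarith), abs_of_pos (by linarith)]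
  exact log_lt_log (by linarith) (by linarith)

theorem lob_pi_div_four_add_lob_pi_div_two_sub :
    Lob (π / 4) + Lob (π / 2 - π / 4) = 2 * Lob (π / 4) := by
  rw [show π / 2 - π / 4 = π / 4 by ring]
  ring

theorem lob_add_lob_pi_div_two_sub_lt {x : ℝ} (hx : x ∈ Icc 0 (π / 2)) (hne : x ≠ π / 4) :
    Lob x + Lob (π / 2 - x) < 2 * Lob (π / 4) := by
  have hpi := pi_pos
  rw [← lob_pi_div_four_add_lob_pi_div_two_sub]
  rcases hne.lt_or_gt with hlt | hgt
  · exact strictMonoOn_lob_add_lob_pi_div_two_sub ⟨hx.1, hlt.le⟩ ⟨by positivity, le_rfl⟩ hlt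
  · have := strictMonoOn_lob_add_lob_pi_div_two_sub (a := π / 2 - x) (b := π / 4)
      ⟨by linarith [hx.2], by linarith⟩ ⟨by positivity, le_rfl⟩ (by linarith)
    simpa only [sub_sub_cancel, add_comm (Lob x)] using this

/-- On `[0, π/2]` the function `g(x) = Λ(x) + Λ(π/2 − x)` attains its maximum value
`2Λ(π/4)` at `x = π/4`, and this is the only maximum point. -/
theorem stmt_4 :
    (Real.pi / 4 ∈ Set.Icc 0 (Real.pi / 2)) ∧
    Lob (Real.pi / 4) + Lob (Real.pi / 2 - Real.pi / 4) = 2 * Lob (Real.pi / 4) ∧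
    (∀ x ∈ Set.Icc 0 (Real.pi / 2),
      Lob x + Lob (Real.pi / 2 - x) ≤ 2 * Lob (Real.pi / 4)) ∧
    (∀ x ∈ Set.Icc 0 (Real.pi / 2),
      Lob x + Lob (Real.pi / 2 - x) = 2 * Lob (Real.pi / 4) → x = Real.pi / 4) := by
  have hpi := pi_pos
  refine ⟨⟨by positivity, by linarith⟩, lob_pi_div_four_add_lob_pi_div_two_sub,
    fun x hx => ?_, fun x hx hmax => ?_⟩
  · rcases eq_or_ne x (π / 4) with rfl | hne
    · exact lob_pi_div_four_add_lob_pi_div_two_sub.le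
    · exact (lob_add_lob_pi_div_two_sub_lt hx hne).le
  · by_contra hne
    exact (lob_add_lob_pi_div_two_sub_lt hx hne).ne hmax
end

section
/- For every positive integer c, the limit as k → ∞ of (1/(2k+1))·log( ( ∑_{j=0}^{k} ([k choose j]_{2k+1})^4 )^c ) exists and equals (8c/π)·Λ(π/4) = (2c·Vol_Oct)/(2π), where Vol_Oct = 8·Λ(π/4). (This is the Extended Volume Conjecture verified for universal hyperbolic links: for a universal hyperbolic link (N_P, L_P) built from a simple polyhedron P with c vertices, the evaluation at e^{2πi/(2k+1)} of its (2k+1)-colored Jones invariant equals ( ∑_{j=0}^{k} ([k choose j]_{2k+1})^4 )^c, and the hyperbolic volume of N_P − L_P is 2c·Vol_Oct.) -/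
/-
Write `d = 2k + 1` and `S(n) = ∑_{i ≤ n} log sin (iπ/d)`. The factors `sin (π/d)` cancel in
`[k choose j]_d`, so `log [k choose j]_d = S(k) - S(j) - S(k - j)`. The quantum integers `[i]_d`
increase for `2i ≤ d`, so the q-Pascal ratio `[k choose j+1]_d / [k choose j]_d = [k-j]_d / [j+1]_d`
shows that `j ↦ [k choose j]_d` peaks at `j = ⌊k/2⌋`: the sum of fourth powers lies between `M⁴`
and `(k + 1) M⁴` for the middle term `M`, and the factor `k + 1` disappears after dividing the
logarithm by `d`. Finally `S(n)/d` is a Riemann sum of the monotone function `log ∘ sin` with mesh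
`π/d`, so `log M / d → (∫₀^{π/2} - 2 ∫₀^{π/4}) log sin / π = (2/π) Λ(π/4)`.
-/

open Real Filter Finset

/-- The volume of the regular ideal hyperbolic octahedron: `Vol_Oct = 8Λ(π/4)`. -/
noncomputable def VolOct : ℝ := 8 * Lob (Real.pi / 4)

/-- Evaluated quantum integer `[n]_d = sin(nπ/d)/sin(π/d)`. -/
noncomputable def qInt (d n : ℕ) : ℝ := Real.sin (n * Real.pi / d) / Real.sin (Real.pi / d)

/-- Evaluated quantum factorial `[n]_d! = ∏_{i=1}^n [i]_d`. -/
noncomputable def qFact (d n : ℕ) : ℝ := ∏ i ∈ Finset.Icc 1 n, qInt d i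

/-- Evaluated quantum binomial `[k choose j]_d = [k]_d! / ([j]_d! [k−j]_d!)`. -/
noncomputable def qBinom (d k j : ℕ) : ℝ := qFact d k / (qFact d j * qFact d (k - j))

open MeasureTheory Set intervalIntegral Topology

section RiemannSum

variable {f : ℝ → ℝ} {u v b h : ℝ}

theorem integral_le_sub_mul_of_monotoneOn (hf : MonotoneOn f (Ioc u v)) (huv : u ≤ v)
    (hint : IntervalIntegrable f volume u v) : ∫ x in u..v, f x ≤ (v - u) * f v := by
  rcases huv.eq_or_lt with rfl | huv'
  · simp
  calc ∫ x in u..v, f x ≤ ∫ _ in u..v, f v :=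
        integral_mono_on_of_le_Ioo huv hint intervalIntegrable_const
          fun x hx => hf ⟨hx.1, hx.2.le⟩ ⟨huv', le_rfl⟩ hx.2.le
    _ = (v - u) * f v := by rw [intervalIntegral.integral_const, smul_eq_mul]

theorem sub_mul_le_integral_of_monotoneOn (hf : MonotoneOn f (Icc u v)) (huv : u ≤ v) :
    (v - u) * f u ≤ ∫ x in u..v, f x := by
  have hint : IntervalIntegrable f volume u v :=
    MonotoneOn.intervalIntegrable (by rwa [uIcc_of_le huv])
  calc (v - u) * f u = ∫ _ in u..v, f u := by rw [intervalIntegral.integral_const, smul_eq_mul]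
    _ ≤ ∫ x in u..v, f x :=
        integral_mono_on huv intervalIntegrable_const hint
          fun x hx => hf ⟨le_rfl, huv⟩ hx hx.1

theorem integral_le_mul_sum_of_monotoneOn (hf : MonotoneOn f (Ioc 0 b))
    (hint : IntervalIntegrable f volume 0 b) (hh : 0 < h) {n : ℕ} (hn : n * h ≤ b) :
    ∫ x in 0..n * h, f x ≤ h * ∑ i ∈ Finset.Icc 1 n, f (i * h) := by
  induction n with
  | zero => simp
  | succ n ih =>
    push_cast at hn ⊢
    have hnb : n * h ≤ b := by linarith
    have hint_sub : ∀ {x y}, 0 ≤ x → x ≤ y → y ≤ b → IntervalIntegrable f volume x y :=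
      fun hx hxy hy => hint.mono_set <| by
        rw [uIcc_of_le hxy, uIcc_of_le (hx.trans (hxy.trans hy))]
        exact Icc_subset_Icc hx hy
    have hstep := integral_le_sub_mul_of_monotoneOn (u := n * h) (v := (n + 1) * h)
      (hf.mono (Ioc_subset_Ioc (by positivity) hn)) (by linarith)
      (hint_sub (by positivity) (by linarith) hn)
    rw [← integral_add_adjacent_intervals (hint_sub le_rfl (by positivity) hnb)
        (hint_sub (by positivity) (by linarith) hn),
      Finset.sum_Icc_succ_top (by omega), mul_add]
    push_cast
    linarith [ih hnb, show (↑n + 1) * h - ↑n * h = h by ring]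

theorem mul_sum_le_integral_add_of_monotoneOn (hf : MonotoneOn f (Ioc 0 b)) (hh : 0 < h)
    {n : ℕ} (hn : (n + 1) * h ≤ b) :
    h * ∑ i ∈ Finset.Icc 1 (n + 1), f (i * h)
      ≤ (∫ x in h..(n + 1) * h, f x) + h * f ((n + 1) * h) := by
  induction n with
  | zero => simp
  | succ n ih =>
    push_cast at hn ⊢
    have hnb : (n + 1) * h ≤ b := by linarith
    have hmono : ∀ {x y}, 0 < x → y ≤ b → MonotoneOn f (Icc x y) := fun hx hy =>
      hf.mono fun t ht => ⟨hx.trans_le ht.1, ht.2.trans hy⟩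
    have hint : ∀ {x y}, 0 < x → x ≤ y → y ≤ b → IntervalIntegrable f volume x y :=
      fun hx hxy hy => MonotoneOn.intervalIntegrable (by rw [uIcc_of_le hxy]; exact hmono hx hy)
    have hstep := sub_mul_le_integral_of_monotoneOn (u := (n + 1) * h) (v := (n + 1 + 1) * h)
      (hmono (by positivity) hn) (by linarith)
    rw [← integral_add_adjacent_intervals (hint hh (by nlinarith) hnb)
        (hint (by positivity) (by linarith) hn),
      Finset.sum_Icc_succ_top (by omega), mul_add]
    push_cast
    linarith [ih hnb, show (↑n + 1 + 1) * h - (↑n + 1) * h = h by ring]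

theorem tendsto_mul_sum_of_monotoneOn {x : ℝ} (hf : MonotoneOn f (Ioc 0 b))
    (hint : IntervalIntegrable f volume 0 b) {δ : ℕ → ℝ} {n : ℕ → ℕ} (hδ : ∀ k, 0 < δ k)
    (hδ0 : Tendsto δ atTop (𝓝 0)) (hnb : ∀ k, n k * δ k ≤ b) (hn1 : ∀ᶠ k in atTop, 1 ≤ n k)
    (hx : Tendsto (fun k => n k * δ k) atTop (𝓝 x)) :
    Tendsto (fun k => δ k * ∑ i ∈ Finset.Icc 1 (n k), f (i * δ k)) atTop
      (𝓝 (∫ t in 0..x, f t)) := by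
  have hb : 0 ≤ b := (mul_nonneg (Nat.cast_nonneg _) (hδ 0).le).trans (hnb 0)
  set F : ℝ → ℝ := fun y => ∫ t in 0..y, f t
  have hF : ContinuousOn F (Icc 0 b) := by
    simpa [uIcc_of_le hb] using continuousOn_primitive_interval' hint left_mem_uIcc
  have hF_tendsto : ∀ {y : ℕ → ℝ} {z : ℝ}, (∀ᶠ k in atTop, y k ∈ Icc 0 b) →
      Tendsto y atTop (𝓝 z) → Tendsto (fun k => F (y k)) atTop (𝓝 (F z)) := fun hy hyz =>
    (hF _ (isClosed_Icc.mem_of_tendsto hyz hy)).tendsto.comp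
      (tendsto_nhdsWithin_iff.2 ⟨hyz, hy⟩)
  have hδb : ∀ k, 1 ≤ n k → δ k ≤ b := fun k hk =>
    (le_mul_of_one_le_left (hδ k).le (by exact_mod_cast hk)).trans (hnb k)
  have hlower : Tendsto (fun k => F (n k * δ k)) atTop (𝓝 (F x)) :=
    hF_tendsto (.of_forall fun k => ⟨mul_nonneg (Nat.cast_nonneg _) (hδ k).le, hnb k⟩) hx
  have hupper : Tendsto (fun k => F (n k * δ k) - F (δ k) + δ k * f b) atTop (𝓝 (F x)) := by
    have hδF := hF_tendsto (hn1.mono fun k hk => ⟨(hδ k).le, hδb k hk⟩) hδ0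
    simpa [F] using (hlower.sub hδF).add (hδ0.mul_const (f b))
  refine tendsto_of_tendsto_of_tendsto_of_le_of_le' hlower hupper
    (.of_forall fun k => integral_le_mul_sum_of_monotoneOn hf hint (hδ k) (hnb k)) ?_
  filter_upwards [hn1] with k hk
  obtain ⟨m, hm⟩ : ∃ m, n k = m + 1 := ⟨n k - 1, by omega⟩
  have hnδ : n k * δ k ∈ Ioc 0 b := ⟨mul_pos (Nat.cast_pos.2 hk) (hδ k), hnb k⟩
  have hsub : F (n k * δ k) - F (δ k) = ∫ t in δ k..n k * δ k, f t :=
    integral_interval_sub_left (hint.mono_set (uIcc_subset_uIcc left_mem_uIcc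
      (mem_uIcc_of_le hnδ.1.le hnδ.2))) (hint.mono_set (uIcc_subset_uIcc left_mem_uIcc
      (mem_uIcc_of_le (hδ k).le (hδb k hk))))
  calc δ k * ∑ i ∈ Finset.Icc 1 (n k), f (i * δ k)
      ≤ (∫ t in δ k..n k * δ k, f t) + δ k * f (n k * δ k) := by
        have := mul_sum_le_integral_add_of_monotoneOn hf (hδ k) (n := m)
          (by simpa [hm] using hnb k)
        rw [hm]; push_cast; exact this
    _ ≤ F (n k * δ k) - F (δ k) + δ k * f b := by
        rw [hsub]
        gcongr
        · exact (hδ k).le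
        · exact hf hnδ ⟨hnδ.1.trans_le hnδ.2, le_rfl⟩ hnδ.2

end RiemannSum

-- `Ioc`, not `Icc`: the junk value `log (sin 0) = log 0 = 0` breaks monotonicity at `0`.
theorem monotoneOn_log_sin : MonotoneOn (fun x => log (sin x)) (Ioc 0 (π / 2)) :=
  fun _ hx _ hy hxy =>
    log_le_log (sin_pos_of_pos_of_lt_pi hx.1 (by linarith [hx.2, pi_pos]))
      (sin_le_sin_of_le_of_le_pi_div_two (by linarith [hx.1, pi_pos]) hy.2 hxy)

theorem Lob_eq_neg_mul_log_two_sub_integral_log_sin (x : ℝ) :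
    Lob x = -(x * log 2) - ∫ s in 0..x, log (sin s) := by
  have hzeros : {s : ℝ | sin s = 0}.Countable := by
    have : {s : ℝ | sin s = 0} = range fun n : ℤ => (n : ℝ) * π := by
      ext; simp [sin_eq_zero_iff]
    exact this ▸ countable_range _
  have hcongr : ∫ s in 0..x, log |2 * sin s| = ∫ s in 0..x, (log 2 + log (sin s)) := by
    refine integral_congr_ae ?_
    filter_upwards [hzeros.ae_notMem volume] with s hs _
    rw [abs_mul, abs_two, log_mul two_ne_zero (abs_ne_zero.2 hs), log_abs]
  have hint : IntervalIntegrable (fun s => log (sin s)) volume 0 x := intervalIntegrable_log_sin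
  rw [Lob, hcongr, integral_add intervalIntegrable_const hint,
    intervalIntegral.integral_const, smul_eq_mul, sub_zero]
  ring

noncomputable def logSinSum (d n : ℕ) : ℝ := ∑ i ∈ Finset.Icc 1 n, log (sin (i * π / d))

section QuantumBinomial

variable {d i j k n : ℕ}

theorem sin_natCast_mul_pi_div_pos (hi : 0 < i) (hid : i < d) : 0 < sin (i * π / d) := by
  have hd : (0 : ℝ) < d := by exact_mod_cast hi.trans hid
  have hid' : (i : ℝ) < d := by exact_mod_cast hid
  apply sin_pos_of_pos_of_lt_pi (by positivity)
  rw [div_lt_iff₀ hd]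
  nlinarith [pi_pos]

theorem sin_pi_div_natCast_pos (hd : 1 < d) : 0 < sin (π / d) := by
  simpa using sin_natCast_mul_pi_div_pos one_pos hd

theorem qInt_pos (hi : 0 < i) (hid : i < d) : 0 < qInt d i :=
  div_pos (sin_natCast_mul_pi_div_pos hi hid) (sin_pi_div_natCast_pos (by omega))

theorem qInt_le_qInt (hi : 0 < i) (hij : i ≤ j) (hjd : 2 * j ≤ d) : qInt d i ≤ qInt d j := by
  have hd : (0 : ℝ) < d := by exact_mod_cast (show 0 < d by omega)
  have hij' : (i : ℝ) ≤ j := by exact_mod_cast hij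
  have hjd' : 2 * (j : ℝ) ≤ d := by exact_mod_cast hjd
  refine div_le_div_of_nonneg_right (sin_le_sin_of_le_of_le_pi_div_two ?_ ?_ ?_)
    (sin_pi_div_natCast_pos (by omega)).le
  · have : 0 ≤ (i : ℝ) * π / d := by positivity
    linarith [pi_pos]
  · rw [div_le_div_iff₀ hd two_pos]
    nlinarith [pi_pos]
  · gcongr

theorem qFact_pos (hnd : n < d) : 0 < qFact d n :=
  Finset.prod_pos fun _ hi =>
    qInt_pos (Finset.mem_Icc.1 hi).1 ((Finset.mem_Icc.1 hi).2.trans_lt hnd)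

theorem log_qFact (hnd : n < d) :
    log (qFact d n) = logSinSum d n - n * log (sin (π / d)) := by
  rw [qFact, log_prod fun i hi => (qInt_pos (Finset.mem_Icc.1 hi).1
      ((Finset.mem_Icc.1 hi).2.trans_lt hnd)).ne']
  have hsum : ∑ i ∈ Finset.Icc 1 n, log (qInt d i)
      = ∑ i ∈ Finset.Icc 1 n, (log (sin (i * π / d)) - log (sin (π / d))) :=
    Finset.sum_congr rfl fun i hi => log_div
      (sin_natCast_mul_pi_div_pos (Finset.mem_Icc.1 hi).1
        ((Finset.mem_Icc.1 hi).2.trans_lt hnd)).ne'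
      (sin_pi_div_natCast_pos (by simp at hi; omega)).ne'
  rw [hsum, Finset.sum_sub_distrib, Finset.sum_const, Nat.card_Icc, nsmul_eq_mul, logSinSum,
    Nat.add_sub_cancel]

theorem qBinom_pos (hjk : j ≤ k) (hkd : k < d) : 0 < qBinom d k j :=
  div_pos (qFact_pos hkd) (mul_pos (qFact_pos (hjk.trans_lt hkd)) (qFact_pos (by omega)))

theorem log_qBinom (hjk : j ≤ k) (hkd : k < d) :
    log (qBinom d k j) = logSinSum d k - logSinSum d j - logSinSum d (k - j) := by
  rw [qBinom, log_div (qFact_pos hkd).ne'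
      (mul_pos (qFact_pos (hjk.trans_lt hkd)) (qFact_pos (by omega))).ne',
    log_mul (qFact_pos (hjk.trans_lt hkd)).ne' (qFact_pos (by omega)).ne',
    log_qFact hkd, log_qFact (hjk.trans_lt hkd), log_qFact (by omega), Nat.cast_sub hjk]
  ring

theorem qBinom_symm (hjk : j ≤ k) : qBinom d k (k - j) = qBinom d k j := by
  rw [qBinom, qBinom, Nat.sub_sub_self hjk, mul_comm]

theorem qBinom_succ_right_mul_qInt (hjk : j < k) (hkd : k < d) :
    qBinom d k (j + 1) * qInt d (j + 1) = qBinom d k j * qInt d (k - j) := by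
  have hfact_succ : qFact d (j + 1) = qFact d j * qInt d (j + 1) :=
    Finset.prod_Icc_succ_top (by omega) _
  have hfact_sub : qFact d (k - j) = qFact d (k - (j + 1)) * qInt d (k - j) := by
    rw [show k - j = k - (j + 1) + 1 by omega]
    exact Finset.prod_Icc_succ_top (by omega) _
  have h1 := (qFact_pos (d := d) (n := j) (by omega)).ne'
  have h2 := (qFact_pos (d := d) (n := k - (j + 1)) (by omega)).ne'
  have h3 := (qInt_pos (d := d) (i := j + 1) (by omega) (by omega)).ne'
  have h4 := (qInt_pos (d := d) (i := k - j) (by omega) (by omega)).ne'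
  rw [qBinom, qBinom, hfact_succ, hfact_sub]
  field_simp

theorem qBinom_le_qBinom_succ (hkd : 2 * k < d) (hj : 2 * j < k) :
    qBinom d k j ≤ qBinom d k (j + 1) := by
  refine le_of_mul_le_mul_right ?_ (qInt_pos (d := d) (i := j + 1) (by omega) (by omega))
  rw [qBinom_succ_right_mul_qInt (by omega) (by omega)]
  exact mul_le_mul_of_nonneg_left
    (qInt_le_qInt (i := j + 1) (j := k - j) (by omega) (by omega) (by omega))
    (qBinom_pos (by omega) (by omega)).le

theorem qBinom_le_qBinom_half (hkd : 2 * k < d) (hjk : j ≤ k) :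
    qBinom d k j ≤ qBinom d k (k / 2) := by
  wlog hj : 2 * j ≤ k generalizing j
  · rw [← qBinom_symm hjk]
    exact this (Nat.sub_le k j) (by omega)
  have hmono : MonotoneOn (qBinom d k) (Set.Iic (k / 2)) :=
    monotoneOn_of_le_succ ordConnected_Iic fun i _ _ hi => by
      rw [Order.succ_eq_add_one] at hi ⊢
      exact qBinom_le_qBinom_succ hkd (by simp only [Set.mem_Iic] at hi; omega)
  exact hmono (Set.mem_Iic.2 (by omega)) (Set.mem_Iic.2 le_rfl) (by omega)

theorem sum_qBinom_pow_four_bounds (hkd : 2 * k < d) :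
    qBinom d k (k / 2) ^ 4 ≤ ∑ j ∈ Finset.range (k + 1), qBinom d k j ^ 4 ∧
      ∑ j ∈ Finset.range (k + 1), qBinom d k j ^ 4 ≤ (k + 1) * qBinom d k (k / 2) ^ 4 := by
  constructor
  · exact Finset.single_le_sum (f := fun j => qBinom d k j ^ 4) (fun j _ => by positivity)
      (Finset.mem_range.2 (by omega))
  · simpa using Finset.sum_le_card_nsmul (Finset.range (k + 1)) (fun j => qBinom d k j ^ 4) _
      fun j hj => pow_le_pow_left₀ (qBinom_pos (by simp at hj; omega) (by omega)).le
        (qBinom_le_qBinom_half hkd (by simp at hj; omega)) 4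

end QuantumBinomial

theorem tendsto_two_mul_natCast_add_one_atTop :
    Tendsto (fun k : ℕ => 2 * (k : ℝ) + 1) atTop atTop :=
  tendsto_atTop_add_const_right _ _ (tendsto_natCast_atTop_atTop.const_mul_atTop two_pos)

theorem tendsto_div_two_mul_add_one {a : ℕ → ℝ} {α C : ℝ} (ha : ∀ k, |a k - α * k| ≤ C) :
    Tendsto (fun k : ℕ => a k / (2 * k + 1)) atTop (𝓝 (α / 2)) := by
  rw [tendsto_iff_norm_sub_tendsto_zero]
  refine squeeze_zero_norm (fun k => ?_)
    (tendsto_const_nhds.div_atTop tendsto_two_mul_natCast_add_one_atTop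
      (a := C + |α| / 2))
  have hk : 0 < 2 * (k : ℝ) + 1 := by positivity
  rw [norm_norm, Real.norm_eq_abs,
    show a k / (2 * k + 1) - α / 2 = (a k - α * k - α / 2) / (2 * k + 1) by field_simp; ring,
    abs_div, abs_of_pos hk]
  gcongr
  calc |a k - α * k - α / 2| ≤ |a k - α * k| + |α / 2| := abs_sub _ _
    _ ≤ C + |α| / 2 := by rw [abs_div, abs_two]; linarith [ha k]

theorem tendsto_logSinSum_div {n : ℕ → ℕ} {x : ℝ} (hnk : ∀ k, n k ≤ k)
    (hn1 : ∀ᶠ k in atTop, 1 ≤ n k) (hx : Tendsto (fun k => (n k : ℝ) / (2 * k + 1)) atTop (𝓝 x)) :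
    Tendsto (fun k => logSinSum (2 * k + 1) (n k) / (2 * k + 1)) atTop
      (𝓝 ((∫ t in 0..π * x, log (sin t)) / π)) := by
  have hriemann := tendsto_mul_sum_of_monotoneOn monotoneOn_log_sin intervalIntegrable_log_sin
    (δ := fun k : ℕ => π / (2 * k + 1)) (fun k => by positivity)
    (tendsto_const_nhds.div_atTop tendsto_two_mul_natCast_add_one_atTop)
    (fun k => by
      have : (n k : ℝ) ≤ k := by exact_mod_cast hnk k
      rw [← mul_div_assoc, div_le_div_iff₀ (by positivity) two_pos]
      nlinarith [pi_pos])
    hn1 ((hx.const_mul π).congr fun k => by ring)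
  refine (hriemann.div_const π).congr fun k => ?_
  simp only [logSinSum, Nat.cast_add, Nat.cast_mul, Nat.cast_ofNat, Nat.cast_one, mul_div_assoc]
  field_simp

theorem tendsto_log_qBinom_half_div :
    Tendsto (fun k : ℕ => log (qBinom (2 * k + 1) k (k / 2)) / (2 * k + 1)) atTop
      (𝓝 (2 / π * Lob (π / 4))) := by
  have hhalf : ∀ k : ℕ, 2 * ((k / 2 : ℕ) : ℝ) ≤ k ∧ (k : ℝ) ≤ 2 * (k / 2 : ℕ) + 1 := fun k => by
    constructor <;> norm_cast <;> omega
  have hk := tendsto_logSinSum_div (n := id) (fun k => le_rfl) (eventually_ge_atTop 1)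
    (tendsto_div_two_mul_add_one (α := 1) (C := 0) fun k => by simp)
  have hfloor := tendsto_logSinSum_div (n := fun k => k / 2) (fun k => Nat.div_le_self k 2)
    ((eventually_ge_atTop 2).mono fun k hk => by omega)
    (tendsto_div_two_mul_add_one (α := 1 / 2) (C := 1 / 2) fun k => by
      rw [abs_le]; constructor <;> linarith [hhalf k])
  have hceil := tendsto_logSinSum_div (n := fun k => k - k / 2) (fun k => Nat.sub_le k _)
    ((eventually_ge_atTop 1).mono fun k hk => by omega)
    (tendsto_div_two_mul_add_one (α := 1 / 2) (C := 1 / 2) fun k => by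
      rw [Nat.cast_sub (Nat.div_le_self k 2), abs_le]; constructor <;> linarith [hhalf k])
  rw [show π * (1 / 2) = π / 2 by ring, integral_log_sin_zero_pi_div_two] at hk
  rw [show π * (1 / 2 / 2) = π / 4 by ring] at hfloor hceil
  convert (hk.sub hfloor).sub hceil using 2 with k
  · rw [log_qBinom (Nat.div_le_self k 2) (by omega)]
    simp only [id]
    ring
  · rw [Lob_eq_neg_mul_log_two_sub_integral_log_sin]
    field_simp
    ring

theorem tendsto_log_natCast_add_one_div :
    Tendsto (fun k : ℕ => log (k + 1) / (2 * k + 1)) atTop (𝓝 0) := by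
  have := (tendsto_pow_log_div_mul_add_atTop 2 (-1) 1 two_ne_zero).comp
    (tendsto_atTop_add_const_right _ 1 tendsto_natCast_atTop_atTop)
  refine this.congr fun k => ?_
  simp only [Function.comp_apply, pow_one]
  ring_nf

theorem log_sum_qBinom_pow_four_bounds {d k : ℕ} (hkd : 2 * k < d) :
    4 * log (qBinom d k (k / 2)) ≤ log (∑ j ∈ Finset.range (k + 1), qBinom d k j ^ 4) ∧
      log (∑ j ∈ Finset.range (k + 1), qBinom d k j ^ 4)
        ≤ 4 * log (qBinom d k (k / 2)) + log (k + 1) := by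
  obtain ⟨hle, hge⟩ := sum_qBinom_pow_four_bounds hkd
  have hM := pow_pos (qBinom_pos (d := d) (Nat.div_le_self k 2) (by omega)) 4
  have hlog_pow : 4 * log (qBinom d k (k / 2)) = log (qBinom d k (k / 2) ^ 4) := by
    rw [log_pow]; norm_num
  rw [hlog_pow, add_comm (log _), ← log_mul (by positivity) hM.ne']
  exact ⟨log_le_log hM hle, log_le_log (hM.trans_le hle) hge⟩

theorem tendsto_log_sum_qBinom_pow_four_div :
    Tendsto (fun k : ℕ =>
        log (∑ j ∈ Finset.range (k + 1), qBinom (2 * k + 1) k j ^ 4) / (2 * k + 1))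
      atTop (𝓝 (8 / π * Lob (π / 4))) := by
  have hlower := tendsto_log_qBinom_half_div.const_mul 4
  have hupper := hlower.add tendsto_log_natCast_add_one_div
  rw [add_zero] at hupper
  rw [show 4 * (2 / π * Lob (π / 4)) = 8 / π * Lob (π / 4) by ring] at hupper hlower
  refine tendsto_of_tendsto_of_tendsto_of_le_of_le hlower hupper (fun k => ?_) (fun k => ?_)
  · rw [mul_div_assoc']
    gcongr
    exact (log_sum_qBinom_pow_four_bounds (by omega)).1
  · rw [mul_div_assoc', ← add_div]
    gcongr
    exact (log_sum_qBinom_pow_four_bounds (by omega)).2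

theorem stmt_12_general (c : ℕ) :
    Filter.Tendsto
      (fun k : ℕ =>
        (1 / (2 * (k : ℝ) + 1)) *
          Real.log ((∑ j ∈ Finset.range (k + 1), (qBinom (2 * k + 1) k j) ^ 4) ^ c))
      Filter.atTop (nhds ((8 * (c : ℝ) / Real.pi) * Lob (Real.pi / 4))) ∧
    (8 * (c : ℝ) / Real.pi) * Lob (Real.pi / 4) = 2 * (c : ℝ) * VolOct / (2 * Real.pi) := by
  refine ⟨?_, by rw [VolOct]; field_simp⟩
  convert tendsto_log_sum_qBinom_pow_four_div.const_mul (c : ℝ) using 2 with k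
  · rw [log_pow]
    ring
  · ring

/-- Extended Volume Conjecture for universal hyperbolic links: for every `c ≥ 1`,
`lim_{k→∞} (1/(2k+1)) log( ( ∑_{j=0}^k [k choose j]_{2k+1}^4 )^c ) = (8c/π) Λ(π/4)
= 2c·Vol_Oct/(2π)`. -/
theorem stmt_12 (c : ℕ) (hc : 0 < c) :
    Filter.Tendsto
      (fun k : ℕ =>
        (1 / (2 * (k : ℝ) + 1)) *
          Real.log ((∑ j ∈ Finset.range (k + 1), (qBinom (2 * k + 1) k j) ^ 4) ^ c))
      Filter.atTop (nhds ((8 * (c : ℝ) / Real.pi) * Lob (Real.pi / 4))) ∧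
    (8 * (c : ℝ) / Real.pi) * Lob (Real.pi / 4) = 2 * (c : ℝ) * VolOct / (2 * Real.pi) :=
  stmt_12_general c
end
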